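/- Let B be a DFA and let ∼ be the equivalence relation ∼_V on Pref(L(B)) determined by any minimum-size e.c. decomposition V of B. Then ∼ is right-invariant: if α ∼ α' and a ∈ Σ is such that αa ∈ Pref(L(B)), then α'a ∈ Pref(L(B)) and αa ∼ α'a. -/

import Mathlib

/-- A deterministic finite automaton with a (possibly partial) transition function,
a unique initial state and a set of final states. -/
structure PDFA (α : Type*) (σ : Type*) where
  step : σ → α → Option σ
  start : σ
  accept : Set σ

namespace PDFA

variable {α : Type*} {σ : Type*}

/-- The transition function extended to strings (read left to right). -/
def evalFrom (M : PDFA α σ) : σ → List α → Option σ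
  | q, [] => some q
  | q, a :: w =>
    match M.step q a with
    | none => none
    | some q' => M.evalFrom q' w

/-- `δ(s, w)`. -/
def eval (M : PDFA α σ) (w : List α) : Option σ :=
  M.evalFrom M.start w

/-- The language accepted by the automaton. -/
def language (M : PDFA α σ) : Set (List α) :=
  {w | ∃ q, M.eval w = some q ∧ q ∈ M.accept}

/-- `Pref(L(M))`: the set of prefixes of accepted words. -/
def prefLang (M : PDFA α σ) : Set (List α) :=
  {w | ∃ v, w ++ v ∈ M.language}

/-- `I_q`: the words of `Pref(L(M))` reaching state `q`. -/
def I (M : PDFA α σ) (q : σ) : Set (List α) :=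
  {w | w ∈ M.prefLang ∧ M.eval w = some q}

/-- Every state is reachable from the initial state, and from every state a final
state can be reached. -/
def Trim (M : PDFA α σ) : Prop :=
  (∀ q : σ, ∃ w : List α, M.eval w = some q) ∧
  (∀ q : σ, ∃ w : List α, ∃ q' : σ, M.evalFrom q w = some q' ∧ q' ∈ M.accept)

variable [LinearOrder α]

/-- A sequence of words which is monotone (non-decreasing or non-increasing) in the
co-lexicographic order (i.e., lexicographic order of the reversed words). -/
def MonotoneColex (x : ℕ → List α) : Prop :=
  (∀ i j : ℕ, i ≤ j → (x i).reverse ≤ (x j).reverse) ∨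
  (∀ i j : ℕ, i ≤ j → (x j).reverse ≤ (x i).reverse)

/-- A set of states is entangled if a single monotone sequence of words of
`Pref(L(M))` reaches each of its states infinitely many times. -/
def EntangledStates (M : PDFA α σ) (S : Set σ) : Prop :=
  ∃ x : ℕ → List α, (∀ i, x i ∈ M.prefLang) ∧ MonotoneColex x ∧
    ∀ q ∈ S, ∀ n : ℕ, ∃ i : ℕ, n ≤ i ∧ M.eval (x i) = some q

/-- `ent(M)`: the maximum cardinality of an entangled set of states. -/
noncomputable def ent (M : PDFA α σ) [Fintype σ] : ℕ :=
  sSup {n : ℕ | ∃ S : Finset σ, S.card = n ∧ M.EntangledStates ↑S}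

/-- The strict co-lex partial order on states: `q₁ ≺ q₂` iff `q₁ ≠ q₂` and every word
reaching `q₁` is co-lexicographically smaller than every word reaching `q₂`. -/
def stateLt (M : PDFA α σ) (q₁ q₂ : σ) : Prop :=
  q₁ ≠ q₂ ∧ ∀ u ∈ M.I q₁, ∀ v ∈ M.I q₂, u.reverse < v.reverse

/-- A set of states which is an antichain for the co-lex partial order. -/
def IsColexAntichain (M : PDFA α σ) (S : Set σ) : Prop :=
  ∀ q₁ ∈ S, ∀ q₂ ∈ S, q₁ ≠ q₂ → ¬ M.stateLt q₁ q₂ ∧ ¬ M.stateLt q₂ q₁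

/-- `width(M)`: the maximum cardinality of a co-lex antichain of states. -/
noncomputable def width (M : PDFA α σ) [Fintype σ] : ℕ :=
  sSup {n : ℕ | ∃ S : Finset σ, S.card = n ∧ M.IsColexAntichain ↑S}

/-- `V` is convex in `(Pref(L(M)), ⪯)`. -/
def ConvexIn (M : PDFA α σ) (V : Set (List α)) : Prop :=
  ∀ ⦃u v w : List α⦄, u ∈ V → w ∈ V → v ∈ M.prefLang →
    u.reverse ≤ v.reverse → v.reverse ≤ w.reverse → v ∈ V

/-- A set of words `V` is entangled in `M` if some monotone sequence of elements of `V`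
passes through each state occurring in `V` infinitely many times. -/
def EntangledWords (M : PDFA α σ) (V : Set (List α)) : Prop :=
  ∃ x : ℕ → List α, (∀ i, x i ∈ V) ∧ MonotoneColex x ∧
    ∀ q : σ, (∃ w ∈ V, M.eval w = some q) →
      ∀ n : ℕ, ∃ i : ℕ, n ≤ i ∧ M.eval (x i) = some q

/-- An entangled convex (e.c.) decomposition of `M`: a partition of `Pref(L(M))` into
convex, entangled sets. -/
def IsECD (M : PDFA α σ) (V : Set (Set (List α))) : Prop :=
  (⋃₀ V) = M.prefLang ∧ V.Pairwise Disjoint ∧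
    ∀ W ∈ V, M.ConvexIn W ∧ M.EntangledWords W

/-- A minimum-size e.c. decomposition: a finite e.c. decomposition of minimum cardinality. -/
def IsMinECD (M : PDFA α σ) (V : Set (Set (List α))) : Prop :=
  V.Finite ∧ M.IsECD V ∧
    ∀ V' : Set (Set (List α)), V'.Finite → M.IsECD V' → V.ncard ≤ V'.ncard

/-- The equivalence relation `∼_𝒱`: two words are equivalent iff they reach the same state
and every element of `𝒱` lying strictly co-lexicographically between them intersects `I_q`. -/
def simV (M : PDFA α σ) (V : Set (Set (List α))) (u v : List α) : Prop :=
  M.eval u = M.eval v ∧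
  ∀ W ∈ V,
    (∀ w ∈ W, min u.reverse v.reverse < w.reverse ∧ w.reverse < max u.reverse v.reverse) →
    ∃ w ∈ W, M.eval w = M.eval u

/-- The decomposition-free characterization of `∼`: the two words reach the same state and
the co-lex interval between them is covered by finitely many convex sets, each entangled in
`M` and intersecting `I_q`. -/
def simR (M : PDFA α σ) (u v : List α) : Prop :=
  M.eval u = M.eval v ∧
  ∃ (n : ℕ) (C : Fin n → Set (List α)),
    (∀ i, C i ⊆ M.prefLang ∧ M.ConvexIn (C i) ∧ M.EntangledWords (C i) ∧
      ∃ w ∈ C i, M.eval w = M.eval u) ∧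
    ∀ w ∈ M.prefLang,
      min u.reverse v.reverse ≤ w.reverse → w.reverse ≤ max u.reverse v.reverse →
      w ∈ ⋃ i, C i

end PDFA

/-!
Let `W ∈ 𝒱` lie strictly between `ua` and `va`. Its words all end in `a`; stripping the `a` from
an entangled sequence of `W` gives a monotone sequence strictly between `u` and `v`, which
eventually stays in one class `V₀`. Since `u ∼ v` (or, if `V₀` reaches past `u` or `v`, by
convexity), `V₀` meets `I_{δ(u)}`. The set `C = V₀a ∩ Pref(L)` is convex and entangled, so all its
states are met inside a single class `W₁`, and all states of `W` are states of `C`. If `W ≠ W₁`,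
merging the classes that meet the co-lex interval between a word of `W ∩ C` and a word of
`W₁ ∩ C` would give a smaller e.c. decomposition. Hence `W = W₁` meets `I_{δ(ua)}`.
-/

open Filter

theorem exists_monotone_retraction_of_frequently {p : ℕ → Prop} (h : ∃ᶠ n in atTop, p n) :
    ∃ g : ℕ → ℕ, Monotone g ∧ (∀ n, p (g n)) ∧ ∀ n, p n → g n = n := by
  classical
  have hex : ∀ n, ∃ k, n ≤ k ∧ p k := frequently_atTop.1 h
  exact ⟨fun n => Nat.find (hex n),
    fun m n hmn => Nat.find_mono fun k hk => ⟨hmn.trans hk.1, hk.2⟩,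
    fun n => (Nat.find_spec (hex n)).2,
    fun n hn => le_antisymm (Nat.find_min' _ ⟨le_rfl, hn⟩) (Nat.find_spec (hex n)).1⟩

namespace List

variable {α : Type*} [LinearOrder α]

theorem strictMono_cons (a : α) : StrictMono (List.cons a) :=
  fun _ _ h => Lex.cons h

theorem exists_eq_cons_of_cons_le_of_le_cons {a : α} {s t l : List α}
    (hs : a :: s ≤ l) (ht : l ≤ a :: t) : ∃ l', l = a :: l' := by
  cases l with
  | nil => exact absurd hs (not_le.2 Lex.nil)
  | cons b l' =>
    have head_le {c d : α} {l₁ l₂ : List α} (h : c :: l₁ ≤ d :: l₂) : c ≤ d :=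
      h.lt_or_eq.elim head_le_of_lt fun h => (cons.inj h).1.le
    exact ⟨l', by rw [le_antisymm (head_le hs) (head_le ht)]⟩

theorem exists_eq_append_singleton_of_le_of_le {a : α} {s t w : List α}
    (hs : a :: s ≤ w.reverse) (ht : w.reverse ≤ a :: t) : ∃ w', w = w' ++ [a] := by
  obtain ⟨l, hl⟩ := exists_eq_cons_of_cons_le_of_le_cons hs ht
  exact ⟨l.reverse, by rw [← reverse_reverse w, hl, reverse_cons]⟩

theorem exists_eq_append_singleton_of_min_lt_of_lt_max {a : α} {u v w : List α}
    (hlo : min (u ++ [a]).reverse (v ++ [a]).reverse < w.reverse)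
    (hhi : w.reverse < max (u ++ [a]).reverse (v ++ [a]).reverse) :
    ∃ y, w = y ++ [a] ∧ min u.reverse v.reverse < y.reverse ∧
      y.reverse < max u.reverse v.reverse := by
  simp only [reverse_concat, ← (strictMono_cons a).monotone.map_min,
    ← (strictMono_cons a).monotone.map_max] at hlo hhi
  obtain ⟨y, rfl⟩ := exists_eq_append_singleton_of_le_of_le hlo.le hhi.le
  rw [reverse_concat, (strictMono_cons a).lt_iff_lt] at hlo hhi
  exact ⟨y, rfl, hlo, hhi⟩

end List

namespace PDFA

variable {α σ : Type*}

section Automaton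

variable (M : PDFA α σ)

theorem evalFrom_append (q : σ) (w x : List α) :
    M.evalFrom q (w ++ x) = (M.evalFrom q w).bind fun q' => M.evalFrom q' x := by
  induction w generalizing q with
  | nil => rfl
  | cons b w ih =>
    simp only [List.cons_append, evalFrom]
    cases M.step q b <;> simp [ih]

theorem eval_append (w x : List α) :
    M.eval (w ++ x) = (M.eval w).bind fun q => M.evalFrom q x :=
  M.evalFrom_append M.start w x

variable {M}

theorem eval_append_eq_of_eval_eq {w w' : List α} (h : M.eval w = M.eval w') (x : List α) :
    M.eval (w ++ x) = M.eval (w' ++ x) := by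
  rw [eval_append, eval_append, h]

theorem mem_prefLang_of_eval_eq {w w' : List α} (hw : w ∈ M.prefLang)
    (h : M.eval w = M.eval w') : w' ∈ M.prefLang := by
  obtain ⟨x, q, hq, hacc⟩ := hw
  exact ⟨x, q, by rwa [← eval_append_eq_of_eval_eq h], hacc⟩

theorem mem_prefLang_of_append_mem {w x : List α} (h : w ++ x ∈ M.prefLang) :
    w ∈ M.prefLang := by
  obtain ⟨y, hy⟩ := h
  exact ⟨x ++ y, by rwa [← List.append_assoc]⟩

theorem exists_eval_eq_some {w : List α} (hw : w ∈ M.prefLang) : ∃ q, M.eval w = some q := by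
  obtain ⟨x, q, hq, -⟩ := hw
  rw [eval_append] at hq
  cases h : M.eval w with
  | none => simp [h] at hq
  | some q => exact ⟨q, rfl⟩

theorem image_eval_subset_inter_of_frequently {S T : Set (List α)} {x : ℕ → List α}
    (hxS : ∀ i, x i ∈ S) (hx : ∀ w ∈ S, ∃ᶠ i in atTop, M.eval (x i) = M.eval w)
    (hT : ∀ᶠ i in atTop, x i ∈ T) : M.eval '' S ⊆ M.eval '' (S ∩ T) := by
  rintro _ ⟨w, hw, rfl⟩
  obtain ⟨i, he, hi⟩ := ((hx w hw).and_eventually hT).exists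
  exact ⟨x i, ⟨hxS i, hi⟩, he⟩

end Automaton

variable [LinearOrder α] {M : PDFA α σ}

section Colex

theorem MonotoneColex.comp {x : ℕ → List α} (hx : MonotoneColex x) {g : ℕ → ℕ}
    (hg : Monotone g) : MonotoneColex (x ∘ g) :=
  hx.imp (fun h _ _ hij => h _ _ (hg hij)) fun h _ _ hij => h _ _ (hg hij)

theorem monotoneColex_append_singleton_iff {x : ℕ → List α} (a : α) :
    MonotoneColex (fun i => x i ++ [a]) ↔ MonotoneColex x := by
  simp only [MonotoneColex, List.reverse_concat, (List.strictMono_cons a).le_iff_le]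

def colexIcc (M : PDFA α σ) (A B : List α) : Set (List α) :=
  {m ∈ M.prefLang | min A.reverse B.reverse ≤ m.reverse ∧ m.reverse ≤ max A.reverse B.reverse}

theorem convexIn_colexIcc (A B : List α) : M.ConvexIn (M.colexIcc A B) :=
  fun _ _ _ ⟨_, hlo, _⟩ ⟨_, _, hhi⟩ hm h₁ h₂ => ⟨hm, hlo.trans h₁, h₂.trans hhi⟩

theorem ConvexIn.colexIcc_subset {C : Set (List α)} (hC : M.ConvexIn C) {A B : List α}
    (hA : A ∈ C) (hB : B ∈ C) : M.colexIcc A B ⊆ C := by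
  rintro m ⟨hm, hlo, hhi⟩
  rcases le_total A.reverse B.reverse with hAB | hBA
  · rw [min_eq_left hAB] at hlo
    rw [max_eq_right hAB] at hhi
    exact hC hA hB hm hlo hhi
  · rw [min_eq_right hBA] at hlo
    rw [max_eq_left hBA] at hhi
    exact hC hB hA hm hlo hhi

theorem ConvexIn.mem_or_mem_of_notMem_colexIcc {f : Set (List α)} (hf : M.ConvexIn f)
    {A B e w : List α} (hA : A ∈ M.prefLang) (hB : B ∈ M.prefLang)
    (he : e ∈ f) (heI : e ∈ M.colexIcc A B) (hw : w ∈ f) (hwp : w ∈ M.prefLang)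
    (hwI : w ∉ M.colexIcc A B) : A ∈ f ∨ B ∈ f := by
  obtain ⟨-, hlo, hhi⟩ := heI
  simp only [colexIcc, Set.mem_ofPred_eq, not_and_or, not_le] at hwI
  rcases hwI with hwI | hwI | hwI
  · exact absurd hwp hwI
  · rw [lt_min_iff] at hwI
    exact (min_le_iff.1 hlo).imp (fun h => hf hw he hA hwI.1.le h)
      fun h => hf hw he hB hwI.2.le h
  · rw [max_lt_iff] at hwI
    exact (le_max_iff.1 hhi).imp (fun h => hf he hw hA h hwI.1.le)
      fun h => hf he hw hB h hwI.2.le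

theorem ConvexIn.image_append_singleton_inter {W : Set (List α)} (hW : M.ConvexIn W) (a : α) :
    M.ConvexIn ((· ++ [a]) '' W ∩ M.prefLang) := by
  rintro _ m _ ⟨⟨w₁, hw₁, rfl⟩, -⟩ ⟨⟨w₂, hw₂, rfl⟩, -⟩ hm h₁ h₂
  rw [List.reverse_concat] at h₁ h₂
  obtain ⟨l, rfl⟩ := List.exists_eq_append_singleton_of_le_of_le h₁ h₂
  rw [List.reverse_concat, (List.strictMono_cons a).le_iff_le] at h₁ h₂
  exact ⟨⟨l, hW hw₁ hw₂ (mem_prefLang_of_append_mem hm) h₁ h₂, rfl⟩, hm⟩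

end Colex

section Entangled

theorem entangledWords_iff {W : Set (List α)} (hW : W ⊆ M.prefLang) :
    M.EntangledWords W ↔ ∃ x : ℕ → List α, (∀ i, x i ∈ W) ∧ MonotoneColex x ∧
      ∀ w ∈ W, ∃ᶠ i in atTop, M.eval (x i) = M.eval w := by
  refine exists_congr fun x => and_congr_right fun _ => and_congr_right fun _ => ?_
  constructor
  · intro h w hw
    obtain ⟨q, hq⟩ := exists_eval_eq_some (hW hw)
    rw [hq]
    exact frequently_atTop.2 (h q ⟨w, hw, hq⟩)
  · rintro h q ⟨w, hw, hq⟩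
    exact frequently_atTop.1 (hq ▸ h w hw)

theorem EntangledWords.of_superset {W U : Set (List α)} (hW : M.EntangledWords W)
    (hWU : W ⊆ U) (himg : M.eval '' U ⊆ M.eval '' W) : M.EntangledWords U := by
  obtain ⟨x, hxW, hmono, hvis⟩ := hW
  exact ⟨x, fun i => hWU (hxW i), hmono, fun q hq => hvis q (himg hq)⟩

theorem EntangledWords.image_append_singleton_inter {W : Set (List α)}
    (hW : M.EntangledWords W) (hWp : W ⊆ M.prefLang) {a : α} {w₀ : List α} (hw₀ : w₀ ∈ W)
    (hw₀a : w₀ ++ [a] ∈ M.prefLang) : M.EntangledWords ((· ++ [a]) '' W ∩ M.prefLang) := by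
  obtain ⟨z, hzW, hmono, hvis⟩ := (entangledWords_iff hWp).1 hW
  have hextend : ∀ {w k}, w ++ [a] ∈ M.prefLang → M.eval (z k) = M.eval w →
      z k ++ [a] ∈ M.prefLang :=
    fun hwa he => mem_prefLang_of_eval_eq hwa (eval_append_eq_of_eval_eq he.symm [a])
  obtain ⟨g, hg, hgext, hgid⟩ :=
    exists_monotone_retraction_of_frequently ((hvis w₀ hw₀).mono fun _ => hextend hw₀a)
  refine (entangledWords_iff Set.inter_subset_right).2
    ⟨fun j => z (g j) ++ [a], fun j => ⟨⟨z (g j), hzW _, rfl⟩, hgext j⟩,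
      (monotoneColex_append_singleton_iff a).2 (hmono.comp hg), ?_⟩
  rintro _ ⟨⟨w, hw, rfl⟩, hwa⟩
  refine (hvis w hw).mono fun k hk => ?_
  show M.eval (z (g k) ++ [a]) = M.eval (w ++ [a])
  rw [hgid k (hextend hwa hk)]
  exact eval_append_eq_of_eval_eq hk [a]

end Entangled

section Decomposition

variable {V : Set (Set (List α))}

theorem IsECD.subset_prefLang (hV : M.IsECD V) {W : Set (List α)} (hW : W ∈ V) :
    W ⊆ M.prefLang :=
  hV.1 ▸ Set.subset_sUnion_of_mem hW

theorem IsECD.exists_mem (hV : M.IsECD V) {w : List α} (hw : w ∈ M.prefLang) :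
    ∃ W ∈ V, w ∈ W :=
  Set.mem_sUnion.1 (hV.1.symm ▸ hw)

theorem IsECD.eq_of_mem (hV : M.IsECD V) {W W' : Set (List α)} (hW : W ∈ V) (hW' : W' ∈ V)
    {w : List α} (hw : w ∈ W) (hw' : w ∈ W') : W = W' :=
  Set.PairwiseDisjoint.elim_set (f := id) hV.2.1 hW hW' w hw hw'

theorem IsECD.exists_eventually_mem (hV : M.IsECD V) (hfin : V.Finite) {y : ℕ → List α}
    (hy : ∀ n, y n ∈ M.prefLang) (hmono : MonotoneColex y) :
    ∃ W ∈ V, ∀ᶠ n in atTop, y n ∈ W := by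
  obtain ⟨W, hW, hfreq⟩ : ∃ W ∈ V, ∃ᶠ n in atTop, y n ∈ W :=
    hfin.frequently_exists.1 (Frequently.of_forall fun n => hV.exists_mem (hy n))
  obtain ⟨N, hN⟩ := hfreq.exists
  refine ⟨W, hW, eventually_atTop.2 ⟨N, fun n hn => ?_⟩⟩
  obtain ⟨m, hnm, hm⟩ := frequently_atTop.1 hfreq n
  have hconv := (hV.2.2 W hW).1
  rcases hmono with h | h
  · exact hconv hN hm (hy n) (h N n hn) (h n m hnm)
  · exact hconv hm hN (hy n) (h n m hnm) (h N n hn)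

theorem IsECD.exists_image_eval_subset (hV : M.IsECD V) (hfin : V.Finite) {C : Set (List α)}
    (hC : C ⊆ M.prefLang) (hent : M.EntangledWords C) :
    ∃ W ∈ V, M.eval '' C ⊆ M.eval '' (C ∩ W) := by
  obtain ⟨t, htC, hmono, hvis⟩ := (entangledWords_iff hC).1 hent
  obtain ⟨W, hW, hev⟩ := hV.exists_eventually_mem hfin (fun n => hC (htC n)) hmono
  exact ⟨W, hW, image_eval_subset_inter_of_frequently htC hvis hev⟩

theorem IsECD.convexIn_sUnion_inter_nonempty (hV : M.IsECD V) {I : Set (List α)}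
    (hI : M.ConvexIn I) : M.ConvexIn (⋃₀ {W ∈ V | (W ∩ I).Nonempty}) := by
  rintro e₁ m e₂ ⟨W₁, hW₁I, he₁⟩ ⟨W₂, hW₂I, he₂⟩ hm h₁ h₂
  obtain ⟨hW₁, c₁, hc₁W, hc₁I⟩ := id hW₁I
  obtain ⟨hW₂, c₂, hc₂W, hc₂I⟩ := id hW₂I
  rcases le_or_gt m.reverse c₁.reverse with hmc₁ | hc₁m
  · exact ⟨W₁, hW₁I, (hV.2.2 W₁ hW₁).1 he₁ hc₁W hm h₁ hmc₁⟩
  rcases le_or_gt c₂.reverse m.reverse with hc₂m | hmc₂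
  · exact ⟨W₂, hW₂I, (hV.2.2 W₂ hW₂).1 hc₂W he₂ hm hc₂m h₂⟩
  obtain ⟨W, hW, hmW⟩ := hV.exists_mem hm
  exact ⟨W, ⟨hW, m, hmW, hI hc₁I hc₂I hm hc₁m.le hmc₂.le⟩, hmW⟩

theorem IsECD.insert_sUnion_sdiff (hV : M.IsECD V) {F : Set (Set (List α))} (hF : F ⊆ V)
    (hconv : M.ConvexIn (⋃₀ F)) (hent : M.EntangledWords (⋃₀ F)) :
    M.IsECD (insert (⋃₀ F) (V \ F)) := by
  refine ⟨?_, ?_, ?_⟩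
  · rw [Set.sUnion_insert, ← Set.sUnion_union, Set.union_sdiff_cancel hF, hV.1]
  · refine (hV.2.1.mono Set.sdiff_subset).insert_of_symm
      fun W hW _ => Set.disjoint_sUnion_left.2 fun f hf => ?_
    exact hV.2.1 (hF hf) hW.1 (ne_of_mem_of_not_mem hf hW.2)
  · rintro W (rfl | ⟨hW, -⟩)
    exacts [⟨hconv, hent⟩, hV.2.2 W hW]

theorem IsMinECD.subsingleton_of_merge (hV : M.IsMinECD V) {F : Set (Set (List α))}
    (hF : F ⊆ V) (hconv : M.ConvexIn (⋃₀ F)) (hent : M.EntangledWords (⋃₀ F)) :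
    F.Subsingleton := by
  obtain ⟨hfin, hECD, hmin⟩ := hV
  by_contra hF1
  have : Finite F := (hfin.subset hF).to_subtype
  have hFcard : 1 < F.ncard :=
    Set.one_lt_ncard_iff_nontrivial.2 (Set.not_subsingleton_iff.1 hF1)
  have hmerge := hmin _ (hfin.sdiff.insert _) (hECD.insert_sUnion_sdiff hF hconv hent)
  have hinsert := Set.ncard_insert_le (⋃₀ F) (V \ F)
  have hsdiff := Set.ncard_sdiff_add_ncard_of_subset hF hfin
  omega

theorem IsMinECD.eq_of_image_eval_subset (hV : M.IsMinECD V) {W W₁ C : Set (List α)}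
    (hW : W ∈ V) (hW₁ : W₁ ∈ V) (hC : M.ConvexIn C) {A B : List α} (hAW : A ∈ W) (hAC : A ∈ C)
    (hBW₁ : B ∈ W₁) (hBC : B ∈ C) (hWC : M.eval '' W ⊆ M.eval '' C)
    (hCW₁ : M.eval '' C ⊆ M.eval '' W₁) : W = W₁ := by
  have hECD := hV.2.1
  have hA := hECD.subset_prefLang hW hAW
  have hB := hECD.subset_prefLang hW₁ hBW₁
  set F := {f ∈ V | (f ∩ M.colexIcc A B).Nonempty}
  have hWF : W ∈ F := ⟨hW, A, hAW, hA, min_le_left _ _, le_max_left _ _⟩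
  have hW₁F : W₁ ∈ F := ⟨hW₁, B, hBW₁, hB, min_le_right _ _, le_max_right _ _⟩
  have himg : M.eval '' ⋃₀ F ⊆ M.eval '' W₁ := by
    rintro _ ⟨w, ⟨f, ⟨hf, e, hef, heI⟩, hwf⟩, rfl⟩
    by_cases hwI : w ∈ M.colexIcc A B
    · exact hCW₁ ⟨w, hC.colexIcc_subset hAC hBC hwI, rfl⟩
    -- outside the interval, `f` contains `A` or `B` by convexity, hence is `W` or `W₁`
    obtain rfl | rfl : f = W ∨ f = W₁ :=
      ((hECD.2.2 f hf).1.mem_or_mem_of_notMem_colexIcc hA hB hef heI hwf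
        (hECD.subset_prefLang hf hwf) hwI).imp
        (hECD.eq_of_mem hf hW · hAW) (hECD.eq_of_mem hf hW₁ · hBW₁)
    · exact hCW₁ (hWC ⟨w, hwf, rfl⟩)
    · exact ⟨w, hwf, rfl⟩
  exact hV.subsingleton_of_merge (fun _ hf => hf.1)
    (hECD.convexIn_sUnion_inter_nonempty (convexIn_colexIcc A B))
    ((hECD.2.2 W₁ hW₁).2.of_superset (Set.subset_sUnion_of_mem hW₁F) himg) hWF hW₁F

theorem simV.exists_mem_eval_eq {u v : List α} (h : M.simV V u v) (hu : u ∈ M.prefLang)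
    (hv : v ∈ M.prefLang) (hV : M.IsECD V) {W : Set (List α)} (hW : W ∈ V) {y : List α}
    (hy : y ∈ W) (hylo : min u.reverse v.reverse < y.reverse)
    (hyhi : y.reverse < max u.reverse v.reverse) : ∃ w ∈ W, M.eval w = M.eval u := by
  by_cases hbetween : ∀ w ∈ W,
      min u.reverse v.reverse < w.reverse ∧ w.reverse < max u.reverse v.reverse
  · exact h.2 W hW hbetween
  suffices u ∈ W ∨ v ∈ W from this.elim (fun hu => ⟨u, hu, rfl⟩) fun hv => ⟨v, hv, h.1.symm⟩
  obtain ⟨e, he, hbetween⟩ := not_forall₂.1 hbetween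
  have hconv := (hV.2.2 W hW).1
  rcases le_or_gt e.reverse (min u.reverse v.reverse) with hle | hlt
  · rw [le_min_iff] at hle
    exact (min_lt_iff.1 hylo).imp (fun h' => hconv he hy hu hle.1 h'.le)
      fun h' => hconv he hy hv hle.2 h'.le
  · have hge := max_le_iff.1 (not_lt.1 fun h' => hbetween ⟨hlt, h'⟩)
    exact (lt_max_iff.1 hyhi).imp (fun h' => hconv hy he hu h'.le hge.1)
      fun h' => hconv hy he hv h'.le hge.2

theorem IsMinECD.exists_mem_eval_eq_append (hV : M.IsMinECD V) {u v : List α}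
    (hu : u ∈ M.prefLang) (hv : v ∈ M.prefLang) (h : M.simV V u v) {a : α}
    (ha : u ++ [a] ∈ M.prefLang) {W : Set (List α)} (hW : W ∈ V)
    (hbetween : ∀ w ∈ W, min (u ++ [a]).reverse (v ++ [a]).reverse < w.reverse ∧
      w.reverse < max (u ++ [a]).reverse (v ++ [a]).reverse) :
    ∃ w ∈ W, M.eval w = M.eval (u ++ [a]) := by
  have hECD := hV.2.1
  have hWp := hECD.subset_prefLang hW
  obtain ⟨x, hxW, hxmono, hxvis⟩ := (entangledWords_iff hWp).1 (hECD.2.2 W hW).2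
  choose y hxy hylo hyhi using fun i =>
    List.exists_eq_append_singleton_of_min_lt_of_lt_max (hbetween (x i) (hxW i)).1
      (hbetween (x i) (hxW i)).2
  obtain rfl : x = fun i => y i ++ [a] := funext hxy
  obtain ⟨V₀, hV₀, hyV₀⟩ := hECD.exists_eventually_mem hV.1
    (fun i => mem_prefLang_of_append_mem (hWp (hxW i)))
    ((monotoneColex_append_singleton_iff a).1 hxmono)
  obtain ⟨i, hi⟩ := hyV₀.exists
  obtain ⟨w₀, hw₀, hw₀u⟩ := h.exists_mem_eval_eq hu hv hECD hV₀ hi (hylo i) (hyhi i)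
  have hw₀a : w₀ ++ [a] ∈ M.prefLang :=
    mem_prefLang_of_eval_eq ha (eval_append_eq_of_eval_eq hw₀u.symm [a])
  set C := (· ++ [a]) '' V₀ ∩ M.prefLang
  obtain ⟨W₁, hW₁, hCW₁⟩ := hECD.exists_image_eval_subset hV.1 Set.inter_subset_right
    ((hECD.2.2 V₀ hV₀).2.image_append_singleton_inter (hECD.subset_prefLang hV₀) hw₀ hw₀a)
  have hWC : M.eval '' W ⊆ M.eval '' (W ∩ C) := image_eval_subset_inter_of_frequently hxW
    hxvis (hyV₀.mono fun i hi => ⟨⟨y i, hi, rfl⟩, hWp (hxW i)⟩)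
  obtain ⟨A, ⟨hAW, hAC⟩, -⟩ := hWC ⟨_, hxW 0, rfl⟩
  obtain ⟨B, ⟨hBC, hBW₁⟩, hB⟩ := hCW₁ ⟨w₀ ++ [a], ⟨⟨w₀, hw₀, rfl⟩, hw₀a⟩, rfl⟩
  obtain rfl : W = W₁ := hV.eq_of_image_eval_subset hW hW₁
    ((hECD.2.2 V₀ hV₀).1.image_append_singleton_inter a) hAW hAC hBW₁ hBC
    (hWC.trans (Set.image_mono Set.inter_subset_right))
    (hCW₁.trans (Set.image_mono Set.inter_subset_right))
  exact ⟨B, hBW₁, hB.trans (eval_append_eq_of_eval_eq hw₀u [a])⟩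

end Decomposition

end PDFA

theorem simV_right_invariant_general {α σ : Type*} [LinearOrder α]
    (M : PDFA α σ)
    (V : Set (Set (List α))) (hV : M.IsMinECD V)
    (u v : List α) (hu : u ∈ M.prefLang) (hv : v ∈ M.prefLang)
    (h : M.simV V u v) (a : α) (ha : u ++ [a] ∈ M.prefLang) :
    v ++ [a] ∈ M.prefLang ∧ M.simV V (u ++ [a]) (v ++ [a]) := by
  have heval : M.eval (u ++ [a]) = M.eval (v ++ [a]) := PDFA.eval_append_eq_of_eval_eq h.1 [a]
  exact ⟨PDFA.mem_prefLang_of_eval_eq ha heval, heval,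
    fun W hW hbetween => hV.exists_mem_eval_eq_append hu hv h ha hW hbetween⟩

/-- Lemma: the equivalence relation `∼_V` determined by a minimum-size e.c. decomposition
is right-invariant. -/
theorem simV_right_invariant {α σ : Type*} [LinearOrder α] [Fintype σ]
    (M : PDFA α σ) (hM : M.Trim)
    (V : Set (Set (List α))) (hV : M.IsMinECD V)
    (u v : List α) (hu : u ∈ M.prefLang) (hv : v ∈ M.prefLang)
    (h : M.simV V u v) (a : α) (ha : u ++ [a] ∈ M.prefLang) :
    v ++ [a] ∈ M.prefLang ∧ M.simV V (u ++ [a]) (v ++ [a]) :=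
  simV_right_invariant_general M V hV u v hu hv h a ha
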